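/- Let I, J ⊆ ℝ be open intervals with J connected, set Ω = I × J, and let a₀, a₁, a₂ : Ω → ℝ be smooth functions with a₂ ≠ 0 and ∂_y(a₁/a₂) ≠ 0 everywhere on Ω. Then there exists a differentiable single-variable function A : I → ℝ satisfying a₂(x,y) A'(x) + a₁(x,y) A(x) + a₀(x,y) = 0 for all (x,y) ∈ Ω if and only if the function R := (∂_y(a₀/a₂)) / (∂_y(a₁/a₂)) satisfies ∂_y R = 0 on Ω and ∂_x R + (a₁/a₂) R = a₀/a₂ on Ω; and in this case A is given by A(x) = −R(x,y) (the right-hand side being independent of y). -/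

import Mathlib

open Real Set

/-- Partial derivative in the first variable. -/
noncomputable def px (f : ℝ × ℝ → ℝ) : ℝ × ℝ → ℝ :=
  fun p => deriv (fun t => f (t, p.2)) p.1

/-- Partial derivative in the second variable. -/
noncomputable def py (f : ℝ × ℝ → ℝ) : ℝ × ℝ → ℝ :=
  fun p => deriv (fun t => f (p.1, t)) p.2

/-!
Dividing by `a₂`, the equation reads `A' + b A + c = 0` with `b = a₁ / a₂` and `c = a₀ / a₂`.
For fixed `x`, the function `y ↦ b (x, y) A x + c (x, y)` equals `-A' x`, so its `y`-derivative
`∂_y b · A x + ∂_y c` vanishes, which is `A x = -R (x, y)`. Conversely, if `∂_y R = 0` then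
`R (x, y) = R (x, y₀)` on `I × J` since `J` is connected, and `A := -R (·, y₀)` solves the
equation exactly when `∂_x R + b R = c`.
-/

open Filter Topology

section PartialDerivatives

variable {f : ℝ × ℝ → ℝ} {p : ℝ × ℝ}

theorem DifferentiableAt.hasDerivAt_px (hf : DifferentiableAt ℝ f p) :
    HasDerivAt (fun t => f (t, p.2)) (px f p) p.1 :=
  (hf.comp p.1 (differentiableAt_id.prodMk (differentiableAt_const _))).hasDerivAt

theorem DifferentiableAt.hasDerivAt_py (hf : DifferentiableAt ℝ f p) :
    HasDerivAt (fun t => f (p.1, t)) (py f p) p.2 :=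
  (hf.comp p.2 ((differentiableAt_const _).prodMk differentiableAt_id)).hasDerivAt

theorem DifferentiableAt.py_eq_fderiv (hf : DifferentiableAt ℝ f p) :
    py f p = fderiv ℝ f p (0, 1) := by
  have hslice : HasDerivAt (fun t : ℝ => (p.1, t)) ((0 : ℝ), (1 : ℝ)) p.2 :=
    (hasDerivAt_const _ _).prodMk (hasDerivAt_id _)
  exact (hf.hasFDerivAt.comp_hasDerivAt p.2 hslice).deriv

theorem ContDiffOn.py_of_isOpen {Ω : Set (ℝ × ℝ)} {m n : WithTop ℕ∞}
    (hf : ContDiffOn ℝ n f Ω) (hΩ : IsOpen Ω) (hmn : m + 1 ≤ n) :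
    ContDiffOn ℝ m (py f) Ω := by
  have hn : n ≠ 0 := ne_bot_of_le_ne_bot (by simp) hmn
  have hslice := (hf.fderiv_of_isOpen hΩ hmn).clm_apply (contDiffOn_const (c := ((0 : ℝ), (1 : ℝ))))
  exact hslice.congr fun q hq =>
    ((hf.differentiableOn hn).differentiableAt (hΩ.mem_nhds hq)).py_eq_fderiv

theorem px_eq_deriv_of_eventuallyEq {g : ℝ → ℝ} (h : ∀ᶠ t in 𝓝 p.1, f (t, p.2) = g t) :
    px f p = deriv g p.1 :=
  EventuallyEq.deriv_eq (f₁ := fun t => f (t, p.2)) h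

theorem py_eq_zero_of_eventuallyEq {C : ℝ} (h : ∀ᶠ t in 𝓝 p.2, f (p.1, t) = C) :
    py f p = 0 :=
  (EventuallyEq.deriv_eq (f₁ := fun t => f (p.1, t)) (f := fun _ => C) h).trans (deriv_const _ _)

end PartialDerivatives

section ProductDomain

variable {I J : Set ℝ} {R : ℝ × ℝ → ℝ} {g : ℝ → ℝ}

theorem eq_of_py_eq_zero (hJ : IsOpen J) (hJc : IsPreconnected J)
    (hR : ∀ p ∈ I ×ˢ J, DifferentiableAt ℝ R p) (hpy : ∀ p ∈ I ×ˢ J, py R p = 0)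
    {x y y₀ : ℝ} (hx : x ∈ I) (hy : y ∈ J) (hy₀ : y₀ ∈ J) : R (x, y) = R (x, y₀) :=
  hJ.is_const_of_deriv_eq_zero (f := fun t => R (x, t)) hJc
    (fun t ht => (hR (x, t) ⟨hx, ht⟩).hasDerivAt_py.differentiableAt.differentiableWithinAt)
    (fun t ht => hpy (x, t) ⟨hx, ht⟩) hy hy₀

theorem py_eq_zero_of_eq_comp_fst (hJ : IsOpen J) (hRg : ∀ p ∈ I ×ˢ J, R p = g p.1)
    {p : ℝ × ℝ} (hp : p ∈ I ×ˢ J) : py R p = 0 :=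
  py_eq_zero_of_eventuallyEq (C := g p.1) <| by
    filter_upwards [hJ.mem_nhds hp.2] with t ht using hRg (p.1, t) ⟨hp.1, ht⟩

theorem px_eq_deriv_of_eq_comp_fst (hI : IsOpen I) (hRg : ∀ p ∈ I ×ˢ J, R p = g p.1)
    {p : ℝ × ℝ} (hp : p ∈ I ×ˢ J) : px R p = deriv g p.1 :=
  px_eq_deriv_of_eventuallyEq <| by
    filter_upwards [hI.mem_nhds hp.1] with t ht using hRg (t, p.2) ⟨ht, hp.2⟩

end ProductDomain

section NormalizedEquation

variable {I J : Set ℝ} {b c R : ℝ × ℝ → ℝ} {A : ℝ → ℝ}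

theorem py_mul_add_py_eq_zero_of_solution (hJ : IsOpen J)
    (hA : ∀ p ∈ I ×ˢ J, deriv A p.1 + b p * A p.1 + c p = 0) {p : ℝ × ℝ} (hp : p ∈ I ×ˢ J)
    (hb : DifferentiableAt ℝ b p) (hc : DifferentiableAt ℝ c p) :
    py b p * A p.1 + py c p = 0 := by
  have hconst : ∀ᶠ t in 𝓝 p.2, b (p.1, t) * A p.1 + c (p.1, t) = -deriv A p.1 := by
    filter_upwards [hJ.mem_nhds hp.2] with t ht
    linarith [hA (p.1, t) ⟨hp.1, ht⟩]
  rw [← ((hb.hasDerivAt_py.mul_const (A p.1)).add hc.hasDerivAt_py).deriv]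
  exact py_eq_zero_of_eventuallyEq (f := fun z => b z * A p.1 + c z) hconst

theorem eq_neg_of_solution (hJ : IsOpen J) (hb : ∀ p ∈ I ×ˢ J, DifferentiableAt ℝ b p)
    (hc : ∀ p ∈ I ×ˢ J, DifferentiableAt ℝ c p) (hbne : ∀ p ∈ I ×ˢ J, py b p ≠ 0)
    (hR : ∀ p ∈ I ×ˢ J, R p = py c p / py b p)
    (hA : ∀ p ∈ I ×ˢ J, deriv A p.1 + b p * A p.1 + c p = 0) :
    ∀ p ∈ I ×ˢ J, A p.1 = -R p := by
  intro p hp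
  have hsum := py_mul_add_py_eq_zero_of_solution hJ hA hp (hb p hp) (hc p hp)
  rw [hR p hp, eq_neg_iff_add_eq_zero, add_div_eq_mul_add_div _ _ (hbne p hp), mul_comm, hsum,
    zero_div]

theorem criterion_of_solution (hI : IsOpen I) (hJ : IsOpen J)
    (hA : ∀ p ∈ I ×ˢ J, deriv A p.1 + b p * A p.1 + c p = 0)
    (hAR : ∀ p ∈ I ×ˢ J, A p.1 = -R p) :
    (∀ p ∈ I ×ˢ J, py R p = 0) ∧ ∀ p ∈ I ×ˢ J, px R p + b p * R p = c p := by
  have hRA : ∀ p ∈ I ×ˢ J, R p = -A p.1 := fun p hp => by rw [hAR p hp, neg_neg]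
  refine ⟨fun p hp => py_eq_zero_of_eq_comp_fst hJ (g := fun x => -A x) hRA hp, fun p hp => ?_⟩
  rw [px_eq_deriv_of_eq_comp_fst hI (g := fun x => -A x) hRA hp, deriv.fun_neg, hRA p hp]
  linarith [hA p hp]

theorem exists_solution_of_criterion (hI : IsOpen I) (hJ : IsOpen J) (hJc : IsPreconnected J)
    (hR : ∀ p ∈ I ×ˢ J, DifferentiableAt ℝ R p) (hpy : ∀ p ∈ I ×ˢ J, py R p = 0)
    (hpx : ∀ p ∈ I ×ˢ J, px R p + b p * R p = c p) :
    ∃ A : ℝ → ℝ, DifferentiableOn ℝ A I ∧ ∀ p ∈ I ×ˢ J, deriv A p.1 + b p * A p.1 + c p = 0 := by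
  rcases J.eq_empty_or_nonempty with rfl | ⟨y₀, hy₀⟩
  · exact ⟨0, differentiableOn_const 0, by simp⟩
  have hRy : ∀ p ∈ I ×ˢ J, R p = R (p.1, y₀) := fun p hp =>
    eq_of_py_eq_zero hJ hJc hR hpy hp.1 hp.2 hy₀
  refine ⟨fun x => -R (x, y₀), fun x hx => ?_, fun p hp => ?_⟩
  · exact (hR (x, y₀) ⟨hx, hy₀⟩).hasDerivAt_px.differentiableAt.neg.differentiableWithinAt
  · rw [deriv.fun_neg, ← px_eq_deriv_of_eq_comp_fst hI hRy hp]
    simp only [← hRy p hp]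
    linarith [hpx p hp]

end NormalizedEquation

theorem linear_ODE_solvability_criterion_general
    (I J : Set ℝ)
    (hI : IsOpen I)
    (hJ : IsOpen J) (hJconv : Convex ℝ J)
    (a₀ a₁ a₂ : ℝ × ℝ → ℝ)
    (h0 : ContDiffOn ℝ (⊤ : ℕ∞) a₀ (I ×ˢ J))
    (h1 : ContDiffOn ℝ (⊤ : ℕ∞) a₁ (I ×ˢ J))
    (h2 : ContDiffOn ℝ (⊤ : ℕ∞) a₂ (I ×ˢ J))
    (ha₂ : ∀ p ∈ I ×ˢ J, a₂ p ≠ 0)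
    (hne : ∀ p ∈ I ×ˢ J, py (fun z => a₁ z / a₂ z) p ≠ 0)
    (R : ℝ × ℝ → ℝ)
    (hR : ∀ p : ℝ × ℝ,
      R p = py (fun z => a₀ z / a₂ z) p / py (fun z => a₁ z / a₂ z) p) :
    ((∃ A : ℝ → ℝ, DifferentiableOn ℝ A I ∧
        ∀ p ∈ I ×ˢ J, a₂ p * deriv A p.1 + a₁ p * A p.1 + a₀ p = 0) ↔
      ((∀ p ∈ I ×ˢ J, py R p = 0) ∧
        (∀ p ∈ I ×ˢ J, px R p + a₁ p / a₂ p * R p = a₀ p / a₂ p))) ∧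
    (∀ A : ℝ → ℝ, DifferentiableOn ℝ A I →
      (∀ p ∈ I ×ˢ J, a₂ p * deriv A p.1 + a₁ p * A p.1 + a₀ p = 0) →
      ∀ p ∈ I ×ˢ J, A p.1 = -R p) := by
  have hΩ : IsOpen (I ×ˢ J) := hI.prod hJ
  have hdiff (f : ℝ × ℝ → ℝ) (hf : ContDiffOn ℝ (⊤ : ℕ∞) f (I ×ˢ J)) :
      ∀ p ∈ I ×ˢ J, DifferentiableAt ℝ f p := fun p hp =>
    (hf.differentiableOn (by simp)).differentiableAt (hΩ.mem_nhds hp)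
  have hb := h1.div h2 ha₂
  have hc := h0.div h2 ha₂
  have hRsmooth : ContDiffOn ℝ (⊤ : ℕ∞) R (I ×ˢ J) :=
    ((hc.py_of_isOpen hΩ (by simp)).div (hb.py_of_isOpen hΩ (by simp)) hne).congr
      fun p _ => hR p
  have hnormal (A : ℝ → ℝ) :
      (∀ p ∈ I ×ˢ J, a₂ p * deriv A p.1 + a₁ p * A p.1 + a₀ p = 0) ↔
        ∀ p ∈ I ×ˢ J, deriv A p.1 + a₁ p / a₂ p * A p.1 + a₀ p / a₂ p = 0 :=
    forall₂_congr fun p hp => by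
      field_simp [ha₂ p hp]
      rw [mul_zero]
  have hformula (A : ℝ → ℝ) (hA : ∀ p ∈ I ×ˢ J, a₂ p * deriv A p.1 + a₁ p * A p.1 + a₀ p = 0) :=
    eq_neg_of_solution hJ (hdiff _ hb) (hdiff _ hc) hne (fun p _ => hR p) ((hnormal A).1 hA)
  refine ⟨⟨fun ⟨A, _, hA⟩ => criterion_of_solution hI hJ ((hnormal A).1 hA) (hformula A hA),
    fun ⟨hpy, hpx⟩ => ?_⟩, fun A _ hA => hformula A hA⟩
  obtain ⟨A, hAdiff, hA⟩ := exists_solution_of_criterion hI hJ hJconv.isPreconnected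
    (hdiff R hRsmooth) hpy hpx
  exact ⟨A, hAdiff, (hnormal A).2 hA⟩

/-- solvability criterion for the first-order linear ODE
`a₂ A' + a₁ A + a₀ = 0` with two-variable coefficients, and the formula `A(x) = −R(x,y)`
for the solution. -/
theorem linear_ODE_solvability_criterion
    (I J : Set ℝ)
    (hI : IsOpen I) (hIconv : Convex ℝ I)
    (hJ : IsOpen J) (hJconv : Convex ℝ J)
    (a₀ a₁ a₂ : ℝ × ℝ → ℝ)
    (h0 : ContDiffOn ℝ (⊤ : ℕ∞) a₀ (I ×ˢ J))
    (h1 : ContDiffOn ℝ (⊤ : ℕ∞) a₁ (I ×ˢ J))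
    (h2 : ContDiffOn ℝ (⊤ : ℕ∞) a₂ (I ×ˢ J))
    (ha₂ : ∀ p ∈ I ×ˢ J, a₂ p ≠ 0)
    (hne : ∀ p ∈ I ×ˢ J, py (fun z => a₁ z / a₂ z) p ≠ 0)
    (R : ℝ × ℝ → ℝ)
    (hR : ∀ p : ℝ × ℝ,
      R p = py (fun z => a₀ z / a₂ z) p / py (fun z => a₁ z / a₂ z) p) :
    ((∃ A : ℝ → ℝ, DifferentiableOn ℝ A I ∧
        ∀ p ∈ I ×ˢ J, a₂ p * deriv A p.1 + a₁ p * A p.1 + a₀ p = 0) ↔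
      ((∀ p ∈ I ×ˢ J, py R p = 0) ∧
        (∀ p ∈ I ×ˢ J, px R p + a₁ p / a₂ p * R p = a₀ p / a₂ p))) ∧
    (∀ A : ℝ → ℝ, DifferentiableOn ℝ A I →
      (∀ p ∈ I ×ˢ J, a₂ p * deriv A p.1 + a₁ p * A p.1 + a₀ p = 0) →
      ∀ p ∈ I ×ˢ J, A p.1 = -R p) :=
  linear_ODE_solvability_criterion_general I J hI hJ hJconv a₀ a₁ a₂ h0 h1 h2 ha₂ hne R hR
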